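/- Let R be a commutative ring, let M and N be finitely generated projective R-modules, let d ≥ 0, and let T be a faithfully flat commutative R-algebra. Then the natural T-linear map P^d_R(M, N) ⊗_R T → P^d_T(M ⊗_R T, N ⊗_R T), sending f ⊗ t to t times the base change of f to T, is bijective. -/

import Mathlib

open TensorProduct

universe u

variable (R : Type u) [CommRing R]

/-- The type of families of functions `S ⊗[R] M → S ⊗[R] N`, one for each commutative
`R`-algebra `S` (no naturality required). -/
abbrev RawLaw (M N : Type u) [AddCommGroup M] [Module R M] [AddCommGroup N] [Module R N] :
    Type (u + 1) :=
  ∀ (S : Type u) [CommRing S] [Algebra R S], S ⊗[R] M → S ⊗[R] N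

variable (M N : Type u) [AddCommGroup M] [Module R M] [AddCommGroup N] [Module R N]

/-- Naturality: such a family is a polynomial law (in the sense of Roby) if it commutes
with the maps induced by every `R`-algebra homomorphism. -/
def IsPolyLaw (f : RawLaw R M N) : Prop :=
  ∀ (S S' : Type u) [CommRing S] [Algebra R S] [CommRing S'] [Algebra R S']
    (φ : S →ₐ[R] S') (x : S ⊗[R] M),
    LinearMap.rTensor N φ.toLinearMap (f S x) = f S' (LinearMap.rTensor M φ.toLinearMap x)

/-- Homogeneity of degree `d`. -/
def IsHomog (d : ℕ) (f : RawLaw R M N) : Prop :=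
  ∀ (S : Type u) [CommRing S] [Algebra R S] (s : S) (x : S ⊗[R] M),
    f S (s • x) = s ^ d • f S x

/-- The `R`-module `P^d(M, N)` of polynomial laws from `M` to `N` homogeneous of
degree `d`, as a submodule of the module of raw families. -/
noncomputable def polyLawHomog (d : ℕ) : Submodule R (RawLaw R M N) where
  carrier := {f | IsPolyLaw R M N f ∧ IsHomog R M N d f}
  add_mem' := by
    rintro f g ⟨hf1, hf2⟩ ⟨hg1, hg2⟩
    constructor
    · intro S S' _ _ _ _ φ x
      show LinearMap.rTensor N φ.toLinearMap (f S x + g S x)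
          = f S' (LinearMap.rTensor M φ.toLinearMap x) + g S' (LinearMap.rTensor M φ.toLinearMap x)
      rw [map_add, hf1 S S' φ x, hg1 S S' φ x]
    · intro S _ _ s xx
      show f S (s • xx) + g S (s • xx) = s ^ d • (f S xx + g S xx)
      rw [hf2 S s xx, hg2 S s xx, smul_add]
  zero_mem' := by
    constructor
    · intro S S' _ _ _ _ φ x
      show LinearMap.rTensor N φ.toLinearMap 0 = (0 : S' ⊗[R] N)
      rw [map_zero]
    · intro S _ _ s xx
      show (0 : S ⊗[R] N) = s ^ d • (0 : S ⊗[R] N)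
      rw [smul_zero]
  smul_mem' := by
    rintro r f ⟨hf1, hf2⟩
    constructor
    · intro S S' _ _ _ _ φ x
      show LinearMap.rTensor N φ.toLinearMap (r • f S x)
          = r • f S' (LinearMap.rTensor M φ.toLinearMap x)
      rw [map_smul, hf1 S S' φ x]
    · intro S _ _ s xx
      show r • f S (s • xx) = s ^ d • (r • f S xx)
      rw [hf2 S s xx, smul_comm]

/-- The base change of a (raw) polynomial law along `R → T`: a family for `M ⊗[R] T`
over `T`, whose value over a commutative `T`-algebra `S` is `f_S` under the canonical
identifications `S ⊗[T] (T ⊗[R] M) ≅ S ⊗[R] M` and `S ⊗[T] (T ⊗[R] N) ≅ S ⊗[R] N`. -/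
noncomputable def baseChangeLaw (T : Type u) [CommRing T] [Algebra R T]
    (f : RawLaw R M N) : RawLaw T (T ⊗[R] M) (T ⊗[R] N) :=
  fun S _ _ =>
    letI : Algebra R S := ((algebraMap T S).comp (algebraMap R T)).toAlgebra
    haveI : IsScalarTower R T S := IsScalarTower.of_algebraMap_eq fun _ => rfl
    fun x =>
      (TensorProduct.AlgebraTensorModule.cancelBaseChange R T S S N).symm
        (f S (TensorProduct.AlgebraTensorModule.cancelBaseChange R T S S M x))

/-!
STATEMENT 4: Let R be a commutative ring, let M and N be finitely generated projective
R-modules, let d ≥ 0, and let T be a faithfully flat commutative R-algebra.  Then the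
natural T-linear map P^d_R(M, N) ⊗_R T → P^d_T(M ⊗_R T, N ⊗_R T), sending f ⊗ t to
t times the base change of f to T, is bijective.  (Formalized: there is a `T`-linear
map on the tensor product sending `t ⊗ f` to `t • (base change of f)`, it is injective,
and its range is exactly the submodule of degree-`d` homogeneous polynomial laws
over `T`.) -/

/-!
For `M` free with basis `b₁, …, bₙ`, naturality determines a law `f` by its value at the universal
point `∑ Xᵢ ⊗ bᵢ` of `R[X₁, …, Xₙ] ⊗ M`, and homogeneity, applied to the generic scalar `t` of
`R[X₁, …, Xₙ][t]`, forces this value to be a sum of degree-`d` monomials with coefficients in `N`.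
Hence `Pᵈ(M, N) ≅ N^K`, with `K` the set of degree-`d` exponents, compatibly with base change, and
the map becomes the isomorphism `T ⊗ N^K ≅ (T ⊗ N)^K`. A finitely generated projective module is
a retract of some `Rⁿ`, and precomposition transports the retraction to both sides of the map.
-/

section UniversalPoint

variable {R M N} {ι : Type}

noncomputable def univPoint [Fintype ι] (b : Module.Basis ι R M) : MvPolynomial ι R ⊗[R] M :=
  ∑ i, MvPolynomial.X i ⊗ₜ b i

theorem rTensor_univPoint [Fintype ι] (b : Module.Basis ι R M) {S : Type u} [CommRing S]
    [Algebra R S] (φ : MvPolynomial ι R →ₐ[R] S) :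
    LinearMap.rTensor M φ.toLinearMap (univPoint b) = ∑ i, φ (MvPolynomial.X i) ⊗ₜ b i := by
  simp [univPoint]

theorem sum_baseChange_repr_tmul [Fintype ι] (b : Module.Basis ι R M) {S : Type u} [CommRing S]
    [Algebra R S] (x : S ⊗[R] M) : ∑ i, (b.baseChange S).repr x i ⊗ₜ[R] b i = x := by
  conv_rhs => rw [← (b.baseChange S).sum_repr x]
  simp [smul_tmul']

theorem baseChange_repr_rTensor (b : Module.Basis ι R M) {S S' : Type u} [CommRing S]
    [Algebra R S] [CommRing S'] [Algebra R S'] (φ : S →ₐ[R] S') (x : S ⊗[R] M) (i : ι) :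
    (b.baseChange S').repr (LinearMap.rTensor M φ.toLinearMap x) i =
      φ ((b.baseChange S).repr x i) := by
  induction x using TensorProduct.induction_on with
  | zero => simp
  | tmul s m => simp
  | add x y hx hy => simp [hx, hy]

theorem baseChange_repr_univPoint [Fintype ι] [DecidableEq ι] (b : Module.Basis ι R M) (i : ι) :
    (b.baseChange (MvPolynomial ι R)).repr (univPoint b) i = MvPolynomial.X i := by
  simp [univPoint, Finsupp.single_apply]

noncomputable def evalLaw (b : Module.Basis ι R M) :
    MvPolynomial ι R ⊗[R] N →ₗ[R] RawLaw R M N where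
  toFun g S _ _ x :=
    LinearMap.rTensor N (MvPolynomial.aeval fun i => (b.baseChange S).repr x i).toLinearMap g
  map_add' _ _ := by
    funext S _ _ x
    exact map_add _ _ _
  map_smul' _ _ := by
    funext S _ _ x
    exact map_smul _ _ _

theorem evalLaw_apply (b : Module.Basis ι R M) (g : MvPolynomial ι R ⊗[R] N) (S : Type u)
    [CommRing S] [Algebra R S] (x : S ⊗[R] M) :
    evalLaw b g S x =
      LinearMap.rTensor N (MvPolynomial.aeval fun i => (b.baseChange S).repr x i).toLinearMap g :=
  rfl

theorem isPolyLaw_evalLaw (b : Module.Basis ι R M) (g : MvPolynomial ι R ⊗[R] N) :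
    IsPolyLaw R M N (evalLaw b g) := by
  intro S S' _ _ _ _ φ x
  simp only [evalLaw_apply, ← LinearMap.rTensor_comp_apply, ← AlgHom.comp_toLinearMap,
    MvPolynomial.comp_aeval, baseChange_repr_rTensor]

theorem evalLaw_univPoint [Fintype ι] [DecidableEq ι] (b : Module.Basis ι R M)
    (g : MvPolynomial ι R ⊗[R] N) : evalLaw b g _ (univPoint b) = g := by
  simp [evalLaw_apply, baseChange_repr_univPoint]

theorem IsPolyLaw.eq_evalLaw [Fintype ι] {f : RawLaw R M N} (hf : IsPolyLaw R M N f)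
    (b : Module.Basis ι R M) : f = evalLaw b (f _ (univPoint b)) := by
  funext S _ _ x
  rw [evalLaw_apply, hf, rTensor_univPoint]
  simp [sum_baseChange_repr_tmul]

end UniversalPoint

section Coefficients

variable {R N} {ι : Type}

noncomputable def coeffTensor (k : ι →₀ ℕ) : MvPolynomial ι R ⊗[R] N →ₗ[R] N :=
  TensorProduct.lid R N ∘ₗ LinearMap.rTensor N (MvPolynomial.lcoeff R k)

@[simp]
theorem coeffTensor_tmul (k : ι →₀ ℕ) (p : MvPolynomial ι R) (w : N) :
    coeffTensor k (p ⊗ₜ w) = MvPolynomial.coeff k p • w := by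
  simp [coeffTensor]

variable (ι) [Fintype ι] [DecidableEq ι]

abbrev degreeExponents (d : ℕ) : Finset (ι →₀ ℕ) :=
  Finset.univ.finsuppAntidiag d

theorem mem_degreeExponents {d : ℕ} {k : ι →₀ ℕ} : k ∈ degreeExponents ι d ↔ k.degree = d := by
  simp [Finset.mem_finsuppAntidiag, Finsupp.degree_eq_sum]

variable (R N) {ι}

noncomputable def homogTensor (d : ℕ) :
    (degreeExponents ι d → N) →ₗ[R] MvPolynomial ι R ⊗[R] N :=
  ∑ k : degreeExponents ι d, TensorProduct.mk R _ N (MvPolynomial.monomial k.1 1) ∘ₗ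
    LinearMap.proj k

variable {R N}

theorem homogTensor_apply {d : ℕ} (c : degreeExponents ι d → N) :
    homogTensor R N d c = ∑ k, MvPolynomial.monomial k.1 1 ⊗ₜ c k := by
  simp [homogTensor]

theorem coeffTensor_homogTensor {d : ℕ} (c : degreeExponents ι d → N)
    (k : degreeExponents ι d) : coeffTensor k.1 (homogTensor R N d c) = c k := by
  simp [homogTensor_apply, MvPolynomial.coeff_monomial]

theorem sum_monomial_coeff_degreeExponents (d : ℕ) (p : MvPolynomial ι R) :
    ∑ k : degreeExponents ι d, MvPolynomial.monomial k.1 (MvPolynomial.coeff k.1 p) =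
      MvPolynomial.homogeneousComponent d p := by
  ext j
  rw [Finset.sum_coe_sort (degreeExponents ι d) fun k => MvPolynomial.monomial k (p.coeff k),
    MvPolynomial.coeff_sum, MvPolynomial.coeff_homogeneousComponent]
  simp [MvPolynomial.coeff_monomial, Finsupp.degree_eq_sum]

theorem homogTensor_coeffTensor (d : ℕ) (g : MvPolynomial ι R ⊗[R] N) :
    homogTensor R N d (fun k => coeffTensor k.1 g) =
      LinearMap.rTensor N (MvPolynomial.homogeneousComponent d) g := by
  have : homogTensor R N d ∘ₗ LinearMap.pi (fun k : degreeExponents ι d => coeffTensor k.1) =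
      LinearMap.rTensor N (MvPolynomial.homogeneousComponent d) := by
    refine TensorProduct.ext' fun p w => ?_
    simp only [LinearMap.comp_apply, LinearMap.pi_apply, homogTensor_apply, coeffTensor_tmul,
      LinearMap.rTensor_tmul, ← sum_monomial_coeff_degreeExponents, sum_tmul, ← smul_tmul,
      MvPolynomial.smul_monomial, smul_eq_mul, mul_one]
  exact LinearMap.congr_fun this g

end Coefficients

section Homogeneity

variable {R M N} {ι : Type}

theorem smul_eq_rTensor_mulLeft {A : Type*} [CommRing A] [Algebra R A] (a : A)
    (y : A ⊗[R] N) : a • y = LinearMap.rTensor N (LinearMap.mulLeft R a) y := by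
  induction y using TensorProduct.induction_on with
  | zero => simp
  | tmul a' w => simp [smul_tmul']
  | add y z hy hz => simp [hy, hz]

theorem aeval_X_mul_C_X_monomial (k : ι →₀ ℕ) (r : R) :
    MvPolynomial.aeval (fun i => Polynomial.X * Polynomial.C (MvPolynomial.X i))
        (MvPolynomial.monomial k r) =
      Polynomial.C (MvPolynomial.monomial k r) * Polynomial.X ^ k.degree := by
  simp only [MvPolynomial.monomial_eq, map_mul, MvPolynomial.aeval_C, Finsupp.prod, map_prod,
    map_pow, MvPolynomial.aeval_X, mul_pow, Finset.prod_mul_distrib, Finset.prod_pow_eq_pow_sum,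
    Finsupp.degree_apply, Polynomial.algebraMap_apply, MvPolynomial.algebraMap_eq]
  ring

theorem aeval_mul_monomial_one {S : Type*} [CommRing S] [Algebra R S] (s : S) (v : ι → S)
    (k : ι →₀ ℕ) :
    MvPolynomial.aeval (fun i => s * v i) (MvPolynomial.monomial k (1 : R)) =
      s ^ k.degree * MvPolynomial.aeval v (MvPolynomial.monomial k (1 : R)) := by
  simp [MvPolynomial.aeval_monomial, Finsupp.prod, mul_pow, Finset.prod_mul_distrib,
    Finset.prod_pow_eq_pow_sum, Finsupp.degree_apply]

theorem lcoeff_comp_aeval_X_mul_C_X (d : ℕ) :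
    (Polynomial.lcoeff (MvPolynomial ι R) d).restrictScalars R ∘ₗ
        (MvPolynomial.aeval fun i => Polynomial.X * Polynomial.C (MvPolynomial.X i)).toLinearMap =
      MvPolynomial.homogeneousComponent d := by
  refine LinearMap.ext fun p => ?_
  induction p using MvPolynomial.induction_on' with
  | monomial k r =>
    simp only [LinearMap.comp_apply, AlgHom.toLinearMap_apply, aeval_X_mul_C_X_monomial,
      LinearMap.restrictScalars_apply, Polynomial.lcoeff_apply, Polynomial.coeff_C_mul_X_pow,
      MvPolynomial.homogeneousComponent_of_mem (MvPolynomial.isHomogeneous_monomial r rfl)]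
  | add p q hp hq => simp only [map_add, hp, hq]

theorem rTensor_homogeneousComponent_univPoint [Fintype ι] {d : ℕ} {f : RawLaw R M N}
    (hf : f ∈ polyLawHomog R M N d) (b : Module.Basis ι R M) :
    LinearMap.rTensor N (MvPolynomial.homogeneousComponent d) (f _ (univPoint b)) =
      f _ (univPoint b) := by
  set A := MvPolynomial ι R
  let ψ : A →ₐ[R] Polynomial A :=
    MvPolynomial.aeval fun i => Polynomial.X * Polynomial.C (MvPolynomial.X i)
  let ν : Polynomial A →ₗ[R] A := (Polynomial.lcoeff A d).restrictScalars R
  have hνC : ν ∘ₗ LinearMap.mulLeft R (Polynomial.X ^ d) ∘ₗ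
      (Polynomial.CAlgHom : A →ₐ[R] Polynomial A).toLinearMap = LinearMap.id := by
    refine LinearMap.ext fun p => ?_
    simp [ν]
  -- `ψ` substitutes `t • Xᵢ` for `Xᵢ`, where `t = Polynomial.X` is a generic scalar.
  have hscale : LinearMap.rTensor M ψ.toLinearMap (univPoint b) =
      (Polynomial.X : Polynomial A) • LinearMap.rTensor M Polynomial.CAlgHom.toLinearMap
        (univPoint b) := by
    rw [rTensor_univPoint, rTensor_univPoint, Finset.smul_sum]
    simp [ψ, smul_tmul']
  have hhom : LinearMap.rTensor N ψ.toLinearMap (f A (univPoint b)) =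
      (Polynomial.X ^ d : Polynomial A) • LinearMap.rTensor N Polynomial.CAlgHom.toLinearMap
        (f A (univPoint b)) := by
    rw [hf.1, hscale, hf.2, hf.1]
  calc LinearMap.rTensor N (MvPolynomial.homogeneousComponent d) (f A (univPoint b))
      = LinearMap.rTensor N ν (LinearMap.rTensor N ψ.toLinearMap (f A (univPoint b))) := by
        rw [← lcoeff_comp_aeval_X_mul_C_X, LinearMap.rTensor_comp_apply]
    _ = f A (univPoint b) := by
        rw [hhom, smul_eq_rTensor_mulLeft, ← LinearMap.rTensor_comp_apply,
          ← LinearMap.rTensor_comp_apply, LinearMap.comp_assoc, hνC, LinearMap.rTensor_id_apply]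

end Homogeneity

section FreeCoefficients

variable {R M N} {ι : Type} [Fintype ι] [DecidableEq ι]

theorem evalLaw_homogTensor_apply (b : Module.Basis ι R M) {d : ℕ} (c : degreeExponents ι d → N)
    (S : Type u) [CommRing S] [Algebra R S] (x : S ⊗[R] M) :
    evalLaw b (homogTensor R N d c) S x =
      ∑ k, MvPolynomial.aeval (fun i => (b.baseChange S).repr x i)
        (MvPolynomial.monomial k.1 (1 : R)) ⊗ₜ c k := by
  simp [evalLaw_apply, homogTensor_apply]

theorem evalLaw_homogTensor_mem (b : Module.Basis ι R M) (d : ℕ) (c : degreeExponents ι d → N) :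
    evalLaw b (homogTensor R N d c) ∈ polyLawHomog R M N d := by
  refine ⟨isPolyLaw_evalLaw b _, fun S _ _ s x => ?_⟩
  simp only [evalLaw_homogTensor_apply, map_smul, Finsupp.smul_apply, smul_eq_mul,
    aeval_mul_monomial_one, Finset.smul_sum, smul_tmul']
  refine Finset.sum_congr rfl fun k _ => ?_
  rw [(mem_degreeExponents ι).mp k.2]

noncomputable def homogCoeffEquiv (b : Module.Basis ι R M) (d : ℕ) :
    polyLawHomog R M N d ≃ₗ[R] (degreeExponents ι d → N) where
  toFun f k := coeffTensor k.1 (f.1 _ (univPoint b))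
  map_add' f g := funext fun k => map_add (coeffTensor k.1) _ _
  map_smul' r f := funext fun k => map_smul (coeffTensor k.1) r _
  invFun c := ⟨evalLaw b (homogTensor R N d c), evalLaw_homogTensor_mem b d c⟩
  left_inv f := by
    refine Subtype.ext ?_
    simp only [homogTensor_coeffTensor, rTensor_homogeneousComponent_univPoint f.2 b]
    exact (f.2.1.eq_evalLaw b).symm
  right_inv c := funext fun k => by simp only [evalLaw_univPoint, coeffTensor_homogTensor]

theorem homogCoeffEquiv_apply (b : Module.Basis ι R M) {d : ℕ} (f : polyLawHomog R M N d)
    (k : degreeExponents ι d) :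
    homogCoeffEquiv b d f k = coeffTensor k.1 (f.1 _ (univPoint b)) :=
  rfl

end FreeCoefficients

section BaseChange

variable {R M N}

-- `baseChangeLaw` fixes one `R`-algebra structure on `S`; any other compatible with `T` equals it.
theorem baseChangeLaw_apply {T : Type u} [CommRing T] [Algebra R T] (f : RawLaw R M N)
    (S : Type u) [CommRing S] [Algebra T S] [Algebra R S] [IsScalarTower R T S]
    (x : S ⊗[T] (T ⊗[R] M)) :
    baseChangeLaw R M N T f S x = (AlgebraTensorModule.cancelBaseChange R T S S N).symm
      (f S (AlgebraTensorModule.cancelBaseChange R T S S M x)) := by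
  obtain rfl : ‹Algebra R S› = ((algebraMap T S).comp (algebraMap R T)).toAlgebra :=
    Algebra.algebra_ext _ _ fun r => IsScalarTower.algebraMap_apply R T S r
  rfl

theorem cancelBaseChange_rTensor {T : Type u} [CommRing T] [Algebra R T] (P : Type u)
    [AddCommGroup P] [Module R P] {S S' : Type u} [CommRing S] [Algebra T S] [Algebra R S]
    [IsScalarTower R T S] [CommRing S'] [Algebra T S'] [Algebra R S'] [IsScalarTower R T S']
    (φ : S →ₐ[T] S') (x : S ⊗[T] (T ⊗[R] P)) :
    AlgebraTensorModule.cancelBaseChange R T S' S' P (LinearMap.rTensor _ φ.toLinearMap x) =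
      LinearMap.rTensor P (φ.restrictScalars R).toLinearMap
        (AlgebraTensorModule.cancelBaseChange R T S S P x) := by
  induction x using TensorProduct.induction_on with
  | zero => simp
  | tmul s y =>
    induction y using TensorProduct.induction_on with
    | zero => simp
    | tmul t p => simp
    | add y z hy hz => simp only [tmul_add, map_add, hy, hz]
  | add x y hx hy => simp only [map_add, hx, hy]

theorem baseChangeLaw_mem {d : ℕ} (T : Type u) [CommRing T] [Algebra R T] {f : RawLaw R M N}
    (hf : f ∈ polyLawHomog R M N d) :
    baseChangeLaw R M N T f ∈ polyLawHomog T (T ⊗[R] M) (T ⊗[R] N) d := by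
  constructor
  · intro S S' _ _ _ _ φ x
    let : Algebra R S := ((algebraMap T S).comp (algebraMap R T)).toAlgebra
    let : Algebra R S' := ((algebraMap T S').comp (algebraMap R T)).toAlgebra
    have : IsScalarTower R T S := IsScalarTower.of_algebraMap_eq fun _ => rfl
    have : IsScalarTower R T S' := IsScalarTower.of_algebraMap_eq fun _ => rfl
    rw [baseChangeLaw_apply, baseChangeLaw_apply, LinearEquiv.eq_symm_apply,
      cancelBaseChange_rTensor, cancelBaseChange_rTensor, LinearEquiv.apply_symm_apply, hf.1]
  · intro S _ _ s x
    let : Algebra R S := ((algebraMap T S).comp (algebraMap R T)).toAlgebra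
    have : IsScalarTower R T S := IsScalarTower.of_algebraMap_eq fun _ => rfl
    rw [baseChangeLaw_apply, baseChangeLaw_apply, map_smul, hf.2, map_smul]

variable (R M N) in
noncomputable def baseChangeHom (d : ℕ) (T : Type u) [CommRing T] [Algebra R T] :
    T ⊗[R] polyLawHomog R M N d →ₗ[T] polyLawHomog T (T ⊗[R] M) (T ⊗[R] N) d :=
  letI : Module R (polyLawHomog T (T ⊗[R] M) (T ⊗[R] N) d) := Module.compHom _ (algebraMap R T)
  haveI : IsScalarTower R T (polyLawHomog T (T ⊗[R] M) (T ⊗[R] N) d) :=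
    ⟨fun r t f => by rw [Algebra.smul_def, mul_smul]; rfl⟩
  LinearMap.liftBaseChange T
    { toFun f := ⟨baseChangeLaw R M N T f.1, baseChangeLaw_mem T f.2⟩
      map_add' f g := by
        refine Subtype.ext ?_
        funext S _ _ x
        exact map_add _ _ _
      map_smul' r f := by
        refine Subtype.ext ?_
        funext S _ _ x
        let : Algebra R S := ((algebraMap T S).comp (algebraMap R T)).toAlgebra
        have : IsScalarTower R T S := IsScalarTower.of_algebraMap_eq fun _ => rfl
        change (AlgebraTensorModule.cancelBaseChange R T S S N).symm
            (r • f.1 S (AlgebraTensorModule.cancelBaseChange R T S S M x)) =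
          algebraMap R T r • (AlgebraTensorModule.cancelBaseChange R T S S N).symm
            (f.1 S (AlgebraTensorModule.cancelBaseChange R T S S M x))
        rw [← algebraMap_smul S r, map_smul, IsScalarTower.algebraMap_apply R T S,
          algebraMap_smul] }

theorem baseChangeHom_tmul {d : ℕ} {T : Type u} [CommRing T] [Algebra R T] (t : T)
    (f : polyLawHomog R M N d) :
    (baseChangeHom R M N d T (t ⊗ₜ f)).1 = t • baseChangeLaw R M N T f.1 :=
  rfl

end BaseChange

section FreeBaseChange

variable {R M N} {ι : Type}

theorem coeffTensor_cancelBaseChange_symm_rTensor_map {T : Type u} [CommRing T] [Algebra R T]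
    (k : ι →₀ ℕ) (g : MvPolynomial ι R ⊗[R] N) :
    coeffTensor k
        ((AlgebraTensorModule.cancelBaseChange R T (MvPolynomial ι T) (MvPolynomial ι T) N).symm
          (LinearMap.rTensor N (MvPolynomial.mapAlgHom (Algebra.ofId R T)).toLinearMap g)) =
      (1 : T) ⊗ₜ coeffTensor k g := by
  induction g using TensorProduct.induction_on with
  | zero => simp
  | tmul p w => simp [MvPolynomial.coeff_map]
  | add g h hg hh => simp only [map_add, hg, hh, tmul_add]

theorem cancelBaseChange_univPoint [Fintype ι] (b : Module.Basis ι R M) (T : Type u)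
    [CommRing T] [Algebra R T] :
    AlgebraTensorModule.cancelBaseChange R T (MvPolynomial ι T) (MvPolynomial ι T) M
        (univPoint (b.baseChange T)) =
      LinearMap.rTensor M (MvPolynomial.mapAlgHom (Algebra.ofId R T)).toLinearMap
        (univPoint b) := by
  simp [univPoint]

theorem coeffTensor_baseChangeLaw_univPoint [Fintype ι] (b : Module.Basis ι R M) (T : Type u)
    [CommRing T] [Algebra R T] {f : RawLaw R M N} (hf : IsPolyLaw R M N f) (k : ι →₀ ℕ) :
    coeffTensor k (baseChangeLaw R M N T f _ (univPoint (b.baseChange T))) =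
      (1 : T) ⊗ₜ coeffTensor k (f _ (univPoint b)) := by
  rw [baseChangeLaw_apply, cancelBaseChange_univPoint, ← hf,
    coeffTensor_cancelBaseChange_symm_rTensor_map]

theorem homogCoeffEquiv_baseChangeHom_tmul [Fintype ι] [DecidableEq ι] (b : Module.Basis ι R M)
    {d : ℕ} (T : Type u) [CommRing T] [Algebra R T] (t : T) (f : polyLawHomog R M N d)
    (k : degreeExponents ι d) :
    homogCoeffEquiv (b.baseChange T) d (baseChangeHom R M N d T (t ⊗ₜ f)) k =
      t ⊗ₜ homogCoeffEquiv b d f k := by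
  rw [homogCoeffEquiv_apply, baseChangeHom_tmul]
  change coeffTensor k.1 (t • baseChangeLaw R M N T f.1 _ (univPoint (b.baseChange T))) = _
  rw [map_smul, coeffTensor_baseChangeLaw_univPoint b T f.2.1, smul_tmul', smul_eq_mul, mul_one,
    homogCoeffEquiv_apply]

theorem baseChangeHom_bijective_of_basis [Fintype ι] [DecidableEq ι] (b : Module.Basis ι R M)
    (d : ℕ) (T : Type u) [CommRing T] [Algebra R T] :
    Function.Bijective (baseChangeHom R M N d T) := by
  let E := (homogCoeffEquiv (N := N) b d).baseChange R T _ _ ≪≫ₗ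
    TensorProduct.piRight R T T (fun _ : degreeExponents ι d => N) ≪≫ₗ
    (homogCoeffEquiv (b.baseChange T) d).symm
  suffices baseChangeHom R M N d T = E.toLinearMap from this ▸ E.bijective
  refine LinearMap.ext fun z => ?_
  induction z using TensorProduct.induction_on with
  | zero => simp
  | tmul t f =>
    refine (LinearEquiv.eq_symm_apply _).mpr (funext fun k => ?_)
    simp [homogCoeffEquiv_baseChangeHom_tmul]
  | add z w hz hw => simp only [map_add, hz, hw]

end FreeBaseChange

section Precomposition

variable {R N} {V V' V'' : Type u} [AddCommGroup V] [Module R V] [AddCommGroup V'] [Module R V']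
  [AddCommGroup V''] [Module R V'']

noncomputable def precompLaw (v : V' →ₗ[R] V) (f : RawLaw R V N) : RawLaw R V' N :=
  fun S _ _ x => f S (v.baseChange S x)

theorem precompLaw_mem {d : ℕ} (v : V' →ₗ[R] V) {f : RawLaw R V N}
    (hf : f ∈ polyLawHomog R V N d) : precompLaw v f ∈ polyLawHomog R V' N d := by
  constructor
  · intro S S' _ _ _ _ φ x
    have hv : LinearMap.rTensor V φ.toLinearMap (v.baseChange S x) =
        v.baseChange S' (LinearMap.rTensor V' φ.toLinearMap x) := by
      induction x using TensorProduct.induction_on with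
      | zero => simp
      | tmul s m => simp
      | add x y hx hy => simp only [map_add, hx, hy]
    exact (hf.1 S S' φ _).trans (congrArg (f S') hv)
  · intro S _ _ s x
    exact (congrArg (f S) (map_smul _ s x)).trans (hf.2 S s _)

variable (N) in
noncomputable def precompHomog (d : ℕ) (v : V' →ₗ[R] V) :
    polyLawHomog R V N d →ₗ[R] polyLawHomog R V' N d where
  toFun f := ⟨precompLaw v f.1, precompLaw_mem v f.2⟩
  map_add' _ _ := rfl
  map_smul' _ _ := rfl

theorem precompHomog_apply_coe (d : ℕ) (v : V' →ₗ[R] V) (f : polyLawHomog R V N d) :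
    (precompHomog N d v f).1 = precompLaw v f.1 :=
  rfl

theorem precompHomog_comp (d : ℕ) (v : V' →ₗ[R] V) (w : V'' →ₗ[R] V') :
    precompHomog N d w ∘ₗ precompHomog N d v = precompHomog N d (v ∘ₗ w) := by
  refine LinearMap.ext fun f => Subtype.ext ?_
  funext S _ _ x
  change f.1 S (v.baseChange S (w.baseChange S x)) = f.1 S ((v ∘ₗ w).baseChange S x)
  rw [LinearMap.baseChange_comp, LinearMap.comp_apply]

theorem precompHomog_id (d : ℕ) : precompHomog N d (LinearMap.id : V →ₗ[R] V) = LinearMap.id := by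
  refine LinearMap.ext fun f => Subtype.ext ?_
  funext S _ _ x
  change f.1 S (LinearMap.id.baseChange S x) = f.1 S x
  rw [LinearMap.baseChange_id, LinearMap.id_apply]

theorem cancelBaseChange_baseChange_baseChange (T : Type u) [CommRing T] [Algebra R T]
    (v : V' →ₗ[R] V) (S : Type u) [CommRing S] [Algebra T S] [Algebra R S] [IsScalarTower R T S]
    (x : S ⊗[T] (T ⊗[R] V')) :
    AlgebraTensorModule.cancelBaseChange R T S S V ((v.baseChange T).baseChange S x) =
      v.baseChange S (AlgebraTensorModule.cancelBaseChange R T S S V' x) :=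
  (LinearMap.congr_fun (AlgebraTensorModule.lTensor_comp_cancelBaseChange R T S v) x).symm

theorem baseChangeLaw_precompLaw (T : Type u) [CommRing T] [Algebra R T] (v : V' →ₗ[R] V)
    (f : RawLaw R V N) :
    baseChangeLaw R V' N T (precompLaw v f) =
      precompLaw (v.baseChange T) (baseChangeLaw R V N T f) := by
  funext S _ _ x
  let : Algebra R S := ((algebraMap T S).comp (algebraMap R T)).toAlgebra
  have : IsScalarTower R T S := IsScalarTower.of_algebraMap_eq fun _ => rfl
  simp only [precompLaw, baseChangeLaw_apply, cancelBaseChange_baseChange_baseChange]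

theorem baseChangeHom_comp_baseChange_precompHomog (d : ℕ) (T : Type u) [CommRing T]
    [Algebra R T] (v : V' →ₗ[R] V) :
    baseChangeHom R V' N d T ∘ₗ (precompHomog N d v).baseChange T =
      precompHomog (T ⊗[R] N) d (v.baseChange T) ∘ₗ baseChangeHom R V N d T := by
  refine LinearMap.ext fun z => ?_
  induction z using TensorProduct.induction_on with
  | zero => simp
  | tmul t f =>
    refine Subtype.ext ?_
    simp only [LinearMap.comp_apply, LinearMap.baseChange_tmul, baseChangeHom_tmul]
    rw [precompHomog_apply_coe, precompHomog_apply_coe, baseChangeHom_tmul,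
      baseChangeLaw_precompLaw]
    rfl
  | add z w hz hw => simp only [map_add, hz, hw]

end Precomposition

theorem Function.Bijective.of_retract {α β γ δ : Type*} {f : α → β} {g : γ → δ} {i : α → γ}
    {r : γ → α} {i' : β → δ} {r' : δ → β} (hri : Function.LeftInverse r i)
    (hri' : Function.LeftInverse r' i') (hi : ∀ a, g (i a) = i' (f a))
    (hr : ∀ c, f (r c) = r' (g c)) (hg : Function.Bijective g) : Function.Bijective f := by
  refine ⟨fun a₁ a₂ h => hri.injective (hg.1 ?_), fun b => ?_⟩
  · rw [hi, hi, h]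
  · obtain ⟨c, hc⟩ := hg.2 (i' b)
    exact ⟨r c, by rw [hr, hc, hri']⟩

section Projective

variable {R M N}

theorem baseChangeHom_bijective_of_retract {F : Type u} [AddCommGroup F] [Module R F] (d : ℕ)
    (T : Type u) [CommRing T] [Algebra R T] (σ : M →ₗ[R] F) (π : F →ₗ[R] M)
    (hπσ : π ∘ₗ σ = LinearMap.id) (hF : Function.Bijective (baseChangeHom R F N d T)) :
    Function.Bijective (baseChangeHom R M N d T) := by
  refine hF.of_retract (i := (precompHomog N d π).baseChange T)
    (r := (precompHomog N d σ).baseChange T) (i' := precompHomog _ d (π.baseChange T))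
    (r' := precompHomog _ d (σ.baseChange T)) (fun z => ?_) (fun g => ?_)
    (LinearMap.congr_fun (baseChangeHom_comp_baseChange_precompHomog d T π))
    (LinearMap.congr_fun (baseChangeHom_comp_baseChange_precompHomog d T σ))
  · rw [← LinearMap.comp_apply, ← LinearMap.baseChange_comp, precompHomog_comp, hπσ,
      precompHomog_id, LinearMap.baseChange_id, LinearMap.id_apply]
  · rw [← LinearMap.comp_apply, precompHomog_comp, ← LinearMap.baseChange_comp, hπσ,
      LinearMap.baseChange_id, precompHomog_id, LinearMap.id_apply]

theorem baseChangeHom_bijective [Module.Finite R M] [Module.Projective R M] (d : ℕ) (T : Type u)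
    [CommRing T] [Algebra R T] : Function.Bijective (baseChangeHom R M N d T) := by
  obtain ⟨n, π, hπ⟩ := Module.Finite.exists_fin' R M
  obtain ⟨σ, hσ⟩ := Module.projective_lifting_property π LinearMap.id hπ
  exact baseChangeHom_bijective_of_retract d T σ π hσ
    (baseChangeHom_bijective_of_basis (Pi.basisFun R (Fin n)) d T)

end Projective

theorem stmt_4 [Module.Finite R M] [Module.Projective R M] (d : ℕ)
    (T : Type u) [CommRing T] [Algebra R T] :
    ∃ Φ : T ⊗[R] (polyLawHomog R M N d) →ₗ[T] RawLaw T (T ⊗[R] M) (T ⊗[R] N),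
      (∀ (t : T) (f : polyLawHomog R M N d),
        Φ (t ⊗ₜ[R] f) = t • baseChangeLaw R M N T f.1) ∧
      Function.Injective Φ ∧
      Set.range Φ = ↑(polyLawHomog T (T ⊗[R] M) (T ⊗[R] N) d) := by
  obtain ⟨hinj, hsurj⟩ := baseChangeHom_bijective (R := R) (M := M) (N := N) d T
  refine ⟨(polyLawHomog T _ _ d).subtype ∘ₗ baseChangeHom R M N d T, fun t f => rfl,
    Subtype.val_injective.comp hinj, ?_⟩
  rw [LinearMap.coe_comp, Set.range_comp, hsurj.range_eq, Set.image_univ, Submodule.coe_subtype,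
    Subtype.range_coe]
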